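/- Leftover hash lemma, average case: Let {h_s : {0,1}^n → {0,1}^ℓ | s ∈ S} be a 2-universal hash family, S uniform on S and independent of (X, Z). Then the statistical distance between (S, Z, h_S(X)) and (S, Z, U_ℓ) is at most (1/2)·√(2^{ℓ − H̃_∞(X|Z)}), where U_ℓ is uniform on {0,1}^ℓ independent of (S, Z). -/

import Mathlib

open scoped Classical

/-- Statistical distance between two distributions on a finite set. -/
noncomputable def SD {W : Type*} [Fintype W] (P Q : W → ℝ) : ℝ :=
  (1 / 2) * ∑ w, |P w - Q w|

/-- Average guessing probability: `∑_z max_x Pr[X = x ∧ Z = z]`. -/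
noncomputable def avgGuess {Ω 𝒳 𝒵 : Type*} [Fintype Ω] [Fintype 𝒳] [Fintype 𝒵]
    (p : Ω → ℝ) (X : Ω → 𝒳) (Z : Ω → 𝒵) : ℝ :=
  ∑ z : 𝒵, ⨆ x : 𝒳, ∑ ω ∈ Finset.univ.filter (fun ω => X ω = x ∧ Z ω = z), p ω

/-- Average conditional min-entropy `H̃_∞(X|Z)`. -/
noncomputable def avgMinEnt {Ω 𝒳 𝒵 : Type*} [Fintype Ω] [Fintype 𝒳] [Fintype 𝒵]
    (p : Ω → ℝ) (X : Ω → 𝒳) (Z : Ω → 𝒵) : ℝ :=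
  - Real.logb 2 (avgGuess p X Z)

lemma ite_mul_ite' (A B : Prop) [Decidable A] [Decidable B] (a b : ℝ) :
    (if A then a else 0) * (if B then b else 0) = if A ∧ B then a * b else 0 := by
  by_cases hA : A <;> by_cases hB : B <;> simp [hA, hB]

lemma sum_sq_dev {ι : Type*} [Fintype ι] (f : ι → ℝ) (c : ℝ) :
    ∑ i, (f i - c) ^ 2
      = ∑ i, (f i) ^ 2 - 2 * c * (∑ i, f i) + (Fintype.card ι : ℝ) * c ^ 2 := by
  calc ∑ i, (f i - c) ^ 2 = ∑ i, ((f i) ^ 2 - 2 * c * f i + c ^ 2) :=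
        Finset.sum_congr rfl fun i _ => by ring
    _ = _ := by
        rw [Finset.sum_add_distrib, Finset.sum_sub_distrib, ← Finset.mul_sum,
          Finset.sum_const, nsmul_eq_mul, Finset.card_univ]

set_option maxHeartbeats 2000000 in
/-- average-case leftover hash lemma:
`SD((S, Z, h_S(X)); (S, Z, U_ℓ)) ≤ (1/2)·√(2^{ℓ − H̃_∞(X|Z)})` for a
2-universal hash family `h : S → {0,1}^n → {0,1}^ℓ` with uniform seed. -/
theorem leftover_hash_average_case
    {Ω 𝒵 S : Type*} [Fintype Ω] [Fintype 𝒵] [Fintype S] [Nonempty S]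
    (n ℓ : ℕ)
    (p : Ω → ℝ) (hp0 : ∀ ω, 0 ≤ p ω) (hp1 : ∑ ω, p ω = 1)
    (X : Ω → (Fin n → Bool)) (Z : Ω → 𝒵)
    (h : S → (Fin n → Bool) → (Fin ℓ → Bool))
    (huhf : ∀ x x' : Fin n → Bool, x ≠ x' →
      ((Finset.univ.filter (fun s => h s x = h s x')).card : ℝ) / (Fintype.card S : ℝ)
        ≤ 1 / 2 ^ ℓ) :
    SD
      (fun w : S × 𝒵 × (Fin ℓ → Bool) =>
        (∑ ω ∈ Finset.univ.filter (fun ω => Z ω = w.2.1 ∧ h w.1 (X ω) = w.2.2), p ω)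
          / (Fintype.card S : ℝ))
      (fun w : S × 𝒵 × (Fin ℓ → Bool) =>
        (∑ ω ∈ Finset.univ.filter (fun ω => Z ω = w.2.1), p ω)
          / ((Fintype.card S : ℝ) * 2 ^ ℓ))
    ≤ (1 / 2) * Real.sqrt ((2 : ℝ) ^ ((ℓ : ℝ) - avgMinEnt p X Z)) := by
  set N : ℝ := (Fintype.card S : ℝ) with hN
  set K : ℝ := (2 : ℝ) ^ ℓ with hK
  have hNpos : 0 < N := by
    rw [hN]; exact_mod_cast Fintype.card_pos
  have hKpos : 0 < K := by rw [hK]; positivity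
  have hKcard : K = (Fintype.card (Fin ℓ → Bool) : ℝ) := by
    rw [hK]; simp [Fintype.card_fun]
  have hNne : N ≠ 0 := ne_of_gt hNpos
  have hKne : K ≠ 0 := ne_of_gt hKpos
  have huhf' : ∀ x x' : Fin n → Bool, x ≠ x' →
      ((Finset.univ.filter (fun s => h s x = h s x')).card : ℝ) ≤ N / K := by
    intro x x' hxx
    have h1 := huhf x x' hxx
    rw [div_le_div_iff₀ hNpos (show (0:ℝ) < 2 ^ ℓ by positivity)] at h1
    rw [le_div_iff₀ hKpos, hK]
    linarith
  -- local quantities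
  set q : (Fin n → Bool) → 𝒵 → ℝ :=
    fun x z => ∑ ω ∈ Finset.univ.filter (fun ω => X ω = x ∧ Z ω = z), p ω with hq
  set m : 𝒵 → ℝ := fun z => ⨆ x, q x z with hm
  set αf : 𝒵 → ℝ := fun z => ∑ ω ∈ Finset.univ.filter (fun ω => Z ω = z), p ω with hαf
  set G : ℝ := ∑ z, m z with hG
  have hq0 : ∀ x z, 0 ≤ q x z := fun x z => Finset.sum_nonneg fun ω _ => hp0 ω
  have hbdd : ∀ z, BddAbove (Set.range fun x => q x z) :=
    fun z => (Set.finite_range _).bddAbove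
  have hqm : ∀ x z, q x z ≤ m z := fun x z => le_ciSup (hbdd z) x
  have hm0 : ∀ z, 0 ≤ m z := fun z =>
    le_trans (hq0 (fun _ => false) z) (hqm (fun _ => false) z)
  have hα0 : ∀ z, 0 ≤ αf z := fun z => Finset.sum_nonneg fun ω _ => hp0 ω
  have hαq : ∀ z, αf z = ∑ x, q x z := by
    intro z
    simp only [hαf, hq, Finset.sum_filter]
    rw [Finset.sum_comm]
    refine Finset.sum_congr rfl fun ω _ => ?_
    by_cases hz : Z ω = z <;> simp [hz]
  have hColm : ∀ z, ∑ x, (q x z) ^ 2 ≤ m z * αf z := by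
    intro z
    rw [hαq z, Finset.mul_sum]
    refine Finset.sum_le_sum fun x _ => ?_
    rw [sq]
    exact mul_le_mul_of_nonneg_right (hqm x z) (hq0 x z)
  have hαsum : ∑ z, αf z = 1 := by
    simp only [hαf, Finset.sum_filter]
    rw [Finset.sum_comm]
    rw [← hp1]
    exact Finset.sum_congr rfl fun ω _ => by simp
  have hGpos : 0 < G := by
    obtain ⟨ω₀, hω₀⟩ : ∃ ω, 0 < p ω := by
      by_contra hc
      push_neg at hc
      have h0 : ∑ ω, p ω = 0 := Finset.sum_eq_zero fun ω _ => le_antisymm (hc ω) (hp0 ω)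
      rw [hp1] at h0; norm_num at h0
    have h1 : p ω₀ ≤ q (X ω₀) (Z ω₀) := by
      rw [hq]
      exact Finset.single_le_sum (fun ω _ => hp0 ω) (by simp)
    have h2 : q (X ω₀) (Z ω₀) ≤ m (Z ω₀) := hqm _ _
    have h3 : m (Z ω₀) ≤ G := by
      rw [hG]
      exact Finset.single_le_sum (fun z _ => hm0 z) (Finset.mem_univ _)
    linarith
  -- per-z bound (leftover hash core)
  have step1 : ∀ z : 𝒵, ∑ s : S, ∑ y : Fin ℓ → Bool,
      |(∑ ω ∈ Finset.univ.filter (fun ω => Z ω = z ∧ h s (X ω) = y), p ω) / N -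
        (∑ ω ∈ Finset.univ.filter (fun ω => Z ω = z), p ω) / (N * K)|
      ≤ Real.sqrt (K * ∑ x, (q x z) ^ 2) := by
    intro z
    simp only [hq]
    set T : S → (Fin ℓ → Bool) → ℝ :=
      fun s y => ∑ ω ∈ Finset.univ.filter (fun ω => Z ω = z ∧ h s (X ω) = y), p ω with hT
    set α : ℝ := ∑ ω ∈ Finset.univ.filter (fun ω => Z ω = z), p ω with hα
    set Col : ℝ :=
      ∑ x, (∑ ω ∈ Finset.univ.filter (fun ω => X ω = x ∧ Z ω = z), p ω) ^ 2 with hCol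
    have hα0' : 0 ≤ α := Finset.sum_nonneg fun ω _ => hp0 ω
    have hCol0 : 0 ≤ Col := Finset.sum_nonneg fun x _ => sq_nonneg _
    have hTy : ∀ s, ∑ y, T s y = α := by
      intro s
      simp only [hT, hα, Finset.sum_filter]
      rw [Finset.sum_comm]
      refine Finset.sum_congr rfl fun ω _ => ?_
      by_cases hz : Z ω = z <;> simp [hz]
    have step1' : ∀ s : S, ∑ y, (T s y) ^ 2
        = ∑ ω, ∑ ω', if Z ω = z ∧ Z ω' = z ∧ h s (X ω') = h s (X ω)
            then p ω * p ω' else 0 := by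
      intro s
      calc ∑ y, (T s y) ^ 2
          = ∑ y, ∑ ω, ∑ ω', if (Z ω = z ∧ h s (X ω) = y) ∧ (Z ω' = z ∧ h s (X ω') = y)
              then p ω * p ω' else 0 := by
            refine Finset.sum_congr rfl fun y _ => ?_
            simp only [hT]
            rw [sq, Finset.sum_filter, Finset.sum_mul_sum]
            exact Finset.sum_congr rfl fun ω _ => Finset.sum_congr rfl fun ω' _ =>
              ite_mul_ite' _ _ _ _
        _ = ∑ ω, ∑ ω', ∑ y, if (Z ω = z ∧ h s (X ω) = y) ∧ (Z ω' = z ∧ h s (X ω') = y)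
              then p ω * p ω' else 0 := by
            rw [Finset.sum_comm]
            exact Finset.sum_congr rfl fun ω _ => Finset.sum_comm
        _ = _ := by
            refine Finset.sum_congr rfl fun ω _ => Finset.sum_congr rfl fun ω' _ => ?_
            by_cases h1 : Z ω = z <;> by_cases h2 : Z ω' = z <;> simp [h1, h2]
            by_cases h3 : h s (X ω') = h s (X ω)
            · simp [h3]
            · have hy : ∀ y : Fin ℓ → Bool, ¬(h s (X ω) = y ∧ h s (X ω') = y) :=
                fun y ⟨a, b⟩ => h3 (b.trans a.symm)
              simp [hy, h3]
    have step2 : ∑ s : S, ∑ y, (T s y) ^ 2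
        = ∑ ω, ∑ ω', if Z ω = z ∧ Z ω' = z
            then ((Finset.univ.filter (fun s => h s (X ω') = h s (X ω))).card : ℝ)
              * (p ω * p ω')
            else 0 := by
      calc ∑ s : S, ∑ y, (T s y) ^ 2
          = ∑ s : S, ∑ ω, ∑ ω', if Z ω = z ∧ Z ω' = z ∧ h s (X ω') = h s (X ω)
              then p ω * p ω' else 0 := Finset.sum_congr rfl fun s _ => step1' s
        _ = ∑ ω, ∑ ω', ∑ s : S, if Z ω = z ∧ Z ω' = z ∧ h s (X ω') = h s (X ω)
              then p ω * p ω' else 0 := by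
            rw [Finset.sum_comm]
            exact Finset.sum_congr rfl fun ω _ => Finset.sum_comm
        _ = _ := by
            refine Finset.sum_congr rfl fun ω _ => Finset.sum_congr rfl fun ω' _ => ?_
            by_cases h12 : Z ω = z ∧ Z ω' = z
            · obtain ⟨h1, h2⟩ := h12
              simp only [h1, h2, true_and, if_true]
              rw [← Finset.sum_filter, Finset.sum_const, nsmul_eq_mul]
            · rw [if_neg h12]
              refine Finset.sum_eq_zero fun s _ => if_neg ?_
              rintro ⟨a, b, -⟩; exact h12 ⟨a, b⟩
    have idCol : ∑ ω, ∑ ω', (if Z ω = z ∧ Z ω' = z ∧ X ω' = X ω then p ω * p ω' else 0)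
        = Col := by
      rw [hCol]
      symm
      calc ∑ x, (∑ ω ∈ Finset.univ.filter (fun ω => X ω = x ∧ Z ω = z), p ω) ^ 2
          = ∑ x, ∑ ω, ∑ ω', if (X ω = x ∧ Z ω = z) ∧ (X ω' = x ∧ Z ω' = z)
              then p ω * p ω' else 0 := by
            refine Finset.sum_congr rfl fun x _ => ?_
            rw [sq, Finset.sum_filter, Finset.sum_mul_sum]
            exact Finset.sum_congr rfl fun ω _ => Finset.sum_congr rfl fun ω' _ =>
              ite_mul_ite' _ _ _ _
        _ = ∑ ω, ∑ ω', ∑ x, if (X ω = x ∧ Z ω = z) ∧ (X ω' = x ∧ Z ω' = z)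
              then p ω * p ω' else 0 := by
            rw [Finset.sum_comm]
            exact Finset.sum_congr rfl fun ω _ => Finset.sum_comm
        _ = _ := by
            refine Finset.sum_congr rfl fun ω _ => Finset.sum_congr rfl fun ω' _ => ?_
            by_cases h1 : Z ω = z <;> by_cases h2 : Z ω' = z <;> simp [h1, h2]
            by_cases h3 : X ω' = X ω
            · simp [h3]
            · have hx : ∀ x : Fin n → Bool, ¬(X ω = x ∧ X ω' = x) :=
                fun x ⟨a, b⟩ => h3 (b.trans a.symm)
              simp [hx, h3]
    have idAlpha : ∑ ω, ∑ ω', (if Z ω = z ∧ Z ω' = z then p ω * p ω' else 0) = α ^ 2 := by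
      rw [hα, sq, Finset.sum_filter, Finset.sum_mul_sum]
      exact Finset.sum_congr rfl fun ω _ => Finset.sum_congr rfl fun ω' _ =>
        (ite_mul_ite' _ _ _ _).symm
    have key : ∑ s : S, ∑ y, (T s y) ^ 2 ≤ N * Col + (N / K) * α ^ 2 := by
      rw [step2, ← idCol, ← idAlpha, Finset.mul_sum, Finset.mul_sum, ← Finset.sum_add_distrib]
      refine Finset.sum_le_sum fun ω _ => ?_
      rw [Finset.mul_sum, Finset.mul_sum, ← Finset.sum_add_distrib]
      refine Finset.sum_le_sum fun ω' _ => ?_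
      have hpp : 0 ≤ p ω * p ω' := mul_nonneg (hp0 ω) (hp0 ω')
      by_cases h12 : Z ω = z ∧ Z ω' = z
      · obtain ⟨h1, h2⟩ := h12
        simp only [h1, h2, true_and, if_true]
        have hc : ((Finset.univ.filter (fun s => h s (X ω') = h s (X ω))).card : ℝ) ≤ N := by
          rw [hN]
          exact_mod_cast le_trans (Finset.card_filter_le _ _) (le_of_eq (Finset.card_univ))
        by_cases h3 : X ω' = X ω
        · rw [if_pos h3]
          nlinarith [mul_le_mul_of_nonneg_right hc hpp,
            mul_nonneg (le_of_lt (div_pos hNpos hKpos)) hpp]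
        · rw [if_neg h3]
          have hc2 : ((Finset.univ.filter (fun s => h s (X ω') = h s (X ω))).card : ℝ)
              ≤ N / K := huhf' _ _ h3
          nlinarith [mul_le_mul_of_nonneg_right hc2 hpp]
      · simp only [if_neg h12]
        have hne : ¬(Z ω = z ∧ Z ω' = z ∧ X ω' = X ω) := fun hx => h12 ⟨hx.1, hx.2.1⟩
        rw [if_neg hne]
        simp
    -- Cauchy–Schwarz step
    set c : ℝ := α / (N * K) with hc
    have hsum_prod_T2 : ∑ w : S × (Fin ℓ → Bool), (T w.1 w.2 / N) ^ 2
        = (∑ s : S, ∑ y, (T s y) ^ 2) / N ^ 2 := by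
      rw [Fintype.sum_prod_type]
      simp [div_pow, Finset.sum_div]
    have hsum_prod_T : ∑ w : S × (Fin ℓ → Bool), T w.1 w.2 / N = α := by
      rw [Fintype.sum_prod_type]
      calc ∑ s : S, ∑ y, T s y / N = ∑ s : S, α / N :=
            Finset.sum_congr rfl fun s _ => by rw [← Finset.sum_div, hTy]
        _ = α := by
            rw [Finset.sum_const, nsmul_eq_mul, Finset.card_univ, ← hN]
            field_simp
    have hcard : (Fintype.card (S × (Fin ℓ → Bool)) : ℝ) = N * K := by
      rw [Fintype.card_prod]; push_cast; rw [hN, hKcard]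
    have hdev : ∑ w : S × (Fin ℓ → Bool), (T w.1 w.2 / N - c) ^ 2 ≤ Col / N := by
      rw [sum_sq_dev, hsum_prod_T2, hsum_prod_T, hcard, hc]
      have expand : (N * Col + (N / K) * α ^ 2) / N ^ 2 - 2 * (α / (N * K)) * α
          + (N * K) * (α / (N * K)) ^ 2 = Col / N := by
        field_simp
        ring
      have mono : (∑ s : S, ∑ y, (T s y) ^ 2) / N ^ 2
          ≤ (N * Col + (N / K) * α ^ 2) / N ^ 2 := by gcongr
      linarith
    have habs0 : 0 ≤ ∑ w : S × (Fin ℓ → Bool), |T w.1 w.2 / N - c| :=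
      Finset.sum_nonneg fun w _ => abs_nonneg _
    have cs := Finset.sum_mul_sq_le_sq_mul_sq Finset.univ
      (fun _ : S × (Fin ℓ → Bool) => (1 : ℝ)) (fun w => |T w.1 w.2 / N - c|)
    simp only [one_mul, one_pow, Finset.sum_const, Finset.card_univ, nsmul_eq_mul, mul_one,
      sq_abs] at cs
    have hfin : (∑ w : S × (Fin ℓ → Bool), |T w.1 w.2 / N - c|) ^ 2 ≤ K * Col := by
      calc (∑ w : S × (Fin ℓ → Bool), |T w.1 w.2 / N - c|) ^ 2
          ≤ (Fintype.card (S × (Fin ℓ → Bool)) : ℝ)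
              * ∑ w : S × (Fin ℓ → Bool), (T w.1 w.2 / N - c) ^ 2 := cs
        _ ≤ (N * K) * (Col / N) := by
            rw [hcard]
            exact mul_le_mul_of_nonneg_left hdev (by positivity)
        _ = K * Col := by field_simp
    have final : ∑ w : S × (Fin ℓ → Bool), |T w.1 w.2 / N - c| ≤ Real.sqrt (K * Col) :=
      (Real.le_sqrt habs0 (by positivity)).mpr hfin
    rw [Fintype.sum_prod_type] at final
    exact final
  -- main chain
  have main : ∑ z : 𝒵, ∑ s : S, ∑ y : Fin ℓ → Bool,
      |(∑ ω ∈ Finset.univ.filter (fun ω => Z ω = z ∧ h s (X ω) = y), p ω) / N -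
        (∑ ω ∈ Finset.univ.filter (fun ω => Z ω = z), p ω) / (N * K)|
      ≤ Real.sqrt (K * G) := by
    calc ∑ z : 𝒵, ∑ s : S, ∑ y : Fin ℓ → Bool,
          |(∑ ω ∈ Finset.univ.filter (fun ω => Z ω = z ∧ h s (X ω) = y), p ω) / N -
            (∑ ω ∈ Finset.univ.filter (fun ω => Z ω = z), p ω) / (N * K)|
        ≤ ∑ z : 𝒵, Real.sqrt (K * ∑ x, (q x z) ^ 2) :=
          Finset.sum_le_sum fun z _ => step1 z
      _ ≤ ∑ z : 𝒵, Real.sqrt K * (Real.sqrt (m z) * Real.sqrt (αf z)) := by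
          refine Finset.sum_le_sum fun z _ => ?_
          rw [← Real.sqrt_mul (hm0 z), ← Real.sqrt_mul hKpos.le]
          exact Real.sqrt_le_sqrt (mul_le_mul_of_nonneg_left (hColm z) hKpos.le)
      _ = Real.sqrt K * ∑ z : 𝒵, Real.sqrt (m z) * Real.sqrt (αf z) := by
          rw [Finset.mul_sum]
      _ ≤ Real.sqrt K * Real.sqrt G := by
          refine mul_le_mul_of_nonneg_left ?_ (Real.sqrt_nonneg _)
          have cs2 := Finset.sum_mul_sq_le_sq_mul_sq Finset.univ
            (fun z => Real.sqrt (m z)) (fun z => Real.sqrt (αf z))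
          have e1 : ∑ z : 𝒵, (Real.sqrt (m z)) ^ 2 = G := by
            rw [hG]; exact Finset.sum_congr rfl fun z _ => Real.sq_sqrt (hm0 z)
          have e2 : ∑ z : 𝒵, (Real.sqrt (αf z)) ^ 2 = 1 := by
            rw [← hαsum]; exact Finset.sum_congr rfl fun z _ => Real.sq_sqrt (hα0 z)
          rw [e1, e2, mul_one] at cs2
          exact (Real.le_sqrt (Finset.sum_nonneg fun z _ =>
            mul_nonneg (Real.sqrt_nonneg _) (Real.sqrt_nonneg _)) hGpos.le).mpr cs2
      _ = Real.sqrt (K * G) := (Real.sqrt_mul hKpos.le _).symm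
  -- identify the RHS
  have hRHS : (2 : ℝ) ^ ((ℓ : ℝ) - avgMinEnt p X Z) = K * G := by
    have hAG : avgGuess p X Z = G := by
      simp only [avgGuess, hG, hm, hq]
      congr!
    rw [avgMinEnt, hAG, sub_neg_eq_add, Real.rpow_add (by norm_num : (0:ℝ) < 2),
      Real.rpow_natCast, Real.rpow_logb (by norm_num) (by norm_num) hGpos, hK]
  rw [SD, hRHS]
  refine mul_le_mul_of_nonneg_left ?_ (by norm_num)
  calc ∑ w : S × 𝒵 × (Fin ℓ → Bool),
        |(∑ ω ∈ Finset.univ.filter (fun ω => Z ω = w.2.1 ∧ h w.1 (X ω) = w.2.2), p ω) / N -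
          (∑ ω ∈ Finset.univ.filter (fun ω => Z ω = w.2.1), p ω) / (N * K)|
      = ∑ z : 𝒵, ∑ s : S, ∑ y : Fin ℓ → Bool,
        |(∑ ω ∈ Finset.univ.filter (fun ω => Z ω = z ∧ h s (X ω) = y), p ω) / N -
          (∑ ω ∈ Finset.univ.filter (fun ω => Z ω = z), p ω) / (N * K)| := by
        rw [Fintype.sum_prod_type]
        have e : ∀ s : S, ∑ zy : 𝒵 × (Fin ℓ → Bool),
            |(∑ ω ∈ Finset.univ.filter
                (fun ω => Z ω = zy.1 ∧ h s (X ω) = zy.2), p ω) / N -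
              (∑ ω ∈ Finset.univ.filter (fun ω => Z ω = zy.1), p ω) / (N * K)|
            = ∑ z : 𝒵, ∑ y : Fin ℓ → Bool,
            |(∑ ω ∈ Finset.univ.filter (fun ω => Z ω = z ∧ h s (X ω) = y), p ω) / N -
              (∑ ω ∈ Finset.univ.filter (fun ω => Z ω = z), p ω) / (N * K)| :=
          fun s => Fintype.sum_prod_type _
        rw [Finset.sum_congr rfl fun s _ => e s]
        exact Finset.sum_comm
    _ ≤ Real.sqrt (K * G) := main
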